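/- arXiv:2507.14669 — 4 statements merged into one kernel-verified Lean document; each statement's English description precedes it below -/
import Mathlib

section
/- If two finite simple graphs G₁ and G₂ are distinguished by the Weisfeiler–Leman test (i.e., for some k the multisets of k-level WL labels of their vertices differ), then there exists a tree T such that the number of graph homomorphisms from T to G₁ differs from the number of graph homomorphisms from T to G₂. -/
/-- The type of `k`-level Weisfeiler–Leman labels. -/
def WLLabel : ℕ → Type
  | 0 => Unit
  | k + 1 => Multiset (WLLabel k)

/-- The `k`-level Weisfeiler–Leman label of a vertex. -/
def wlLabel {V : Type} [Fintype V] (G : SimpleGraph V) [DecidableRel G.Adj] :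
    (k : ℕ) → V → WLLabel k
  | 0, _ => ()
  | k + 1, v => (G.neighborFinset v).val.map (wlLabel G k)

/-- The multiset of `k`-level WL labels of all vertices of `G`. -/
def wlMultiset {V : Type} [Fintype V] (G : SimpleGraph V) [DecidableRel G.Adj] (k : ℕ) :
    Multiset (WLLabel k) :=
  (Finset.univ : Finset V).val.map (wlLabel G k)

/-!
Let `t` be a rooted tree of depth at most `k`. The number of homomorphisms `t → G` sending the
root to `v` depends only on the WL label `ℓ_k(v)`: it is `c_t(ℓ_k(v))` for a function `c_t` on
labels defined by recursion on `t` (`TreeOfDepth.labelHomCount`). Summing over `v`, the number of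
homomorphisms `t → G` is the sum of `c_t` over the level-`k` WL multiset of `G`.

Gluing two trees at their roots multiplies the functions `c_t`, so they form a monoid. If this
monoid separates labels, products `∏ (f_b - f_b(b)) / (f_b(a) - f_b(b))` give, on any finite set,
the indicator of a single label `a` as a linear combination of functions `c_t`; so two multisets
with the same sums against every `c_t` coincide. Separation holds by induction on `k`: a
level-`(k+1)` label is a multiset of level-`k` labels, and its sum against `c_t` is `c_{t'}` for the
tree `t'` obtained by hanging `t` below a new root.
-/

open SimpleGraph

section SeparatingFunctions

variable {α : Type*}

theorem Subalgebra.exists_indicator_of_separates {K : Type*} [Field K] (A : Subalgebra K (α → K))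
    (hsep : ∀ a b, a ≠ b → ∃ f ∈ A, f a ≠ f b) (s : Finset α) (a : α) :
    ∃ g ∈ A, g a = 1 ∧ ∀ x ∈ s, x ≠ a → g x = 0 := by
  classical
  choose! f hfA hf using fun b (hb : b ≠ a) => hsep a b hb.symm
  refine ⟨∏ b ∈ s.erase a, (f b a - f b b)⁻¹ • (f b - algebraMap K (α → K) (f b b)),
    ?_, ?_, ?_⟩
  · exact Subalgebra.prod_mem _ fun b hb => Subalgebra.smul_mem _
      (sub_mem (hfA b (Finset.ne_of_mem_erase hb)) (algebraMap_mem _ _)) _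
  · simp only [Finset.prod_apply, Pi.smul_apply, Pi.sub_apply, Pi.algebraMap_apply,
      Algebra.algebraMap_self, RingHom.id_apply, smul_eq_mul]
    exact Finset.prod_eq_one fun b hb =>
      inv_mul_cancel₀ (sub_ne_zero.2 (hf b (Finset.ne_of_mem_erase hb)))
  · intro x hx hxa
    rw [Finset.prod_apply]
    exact Finset.prod_eq_zero (Finset.mem_erase.2 ⟨hxa, hx⟩) (by simp)

theorem Multiset.sum_map_eq_count {R : Type*} [AddCommMonoidWithOne R] [DecidableEq α]
    (m : Multiset α) {g : α → R} {a : α}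
    (ha : g a = 1) (hg : ∀ x ∈ m, x ≠ a → g x = 0) : (m.map g).sum = m.count a := by
  induction m using Multiset.induction_on with
  | empty => simp
  | cons x m ih =>
    rw [Multiset.map_cons, Multiset.sum_cons, Multiset.count_cons,
      ih fun y hy => hg y (Multiset.mem_cons_of_mem hy)]
    by_cases hxa : x = a
    · simp [hxa, ha, add_comm]
    · simp [Ne.symm hxa, hg x (Multiset.mem_cons_self x m) hxa]

theorem Multiset.sum_map_eq_of_mem_adjoin {R : Type*} [CommSemiring R] {M : Submonoid (α → R)}
    {m₁ m₂ : Multiset α}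
    (h : ∀ f ∈ M, (m₁.map f).sum = (m₂.map f).sum) {f : α → R}
    (hf : f ∈ Algebra.adjoin R (M : Set (α → R))) : (m₁.map f).sum = (m₂.map f).sum := by
  let sumMap (m : Multiset α) : (α → R) →ₗ[R] R :=
    { toFun f := (m.map f).sum
      map_add' _ _ := Multiset.sum_map_add
      map_smul' _ _ := Multiset.sum_map_mul_left }
  rw [← Subalgebra.mem_toSubmodule, Algebra.adjoin_eq_span, Submonoid.closure_eq] at hf
  exact LinearMap.eqOn_span' (f := sumMap m₁) (g := sumMap m₂) h hf

theorem Multiset.eq_of_forall_sum_map_eq {K : Type*} [Field K] [CharZero K]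
    (M : Submonoid (α → K)) (hsep : ∀ a b, a ≠ b → ∃ f ∈ M, f a ≠ f b)
    {m₁ m₂ : Multiset α}
    (h : ∀ f ∈ M, (m₁.map f).sum = (m₂.map f).sum) : m₁ = m₂ := by
  classical
  ext a
  obtain ⟨g, hgA, hga, hg⟩ :=
    (Algebra.adjoin K (M : Set (α → K))).exists_indicator_of_separates
      (fun a b hab => (hsep a b hab).imp fun f hf => ⟨Algebra.subset_adjoin hf.1, hf.2⟩)
      (m₁ + m₂).toFinset a
  have hcount (m : Multiset α) (hm : m ≤ m₁ + m₂) : (m.map g).sum = m.count a :=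
    m.sum_map_eq_count hga fun x hx => hg x (Multiset.mem_toFinset.2 (Multiset.mem_of_le hm hx))
  have hsum := Multiset.sum_map_eq_of_mem_adjoin h hgA
  rwa [hcount m₁ (Multiset.le_add_right _ _), hcount m₂ (Multiset.le_add_left _ _),
    Nat.cast_inj] at hsum

end SeparatingFunctions

theorem SimpleGraph.IsTree.sum_sup_edge {V W : Type*} [Finite V] [Finite W] {G : SimpleGraph V}
    {H : SimpleGraph W} (hG : G.IsTree) (hH : H.IsTree) (v : V) (w : W) :
    ((G ⊕g H) ⊔ edge (.inl v) (.inr w)).IsTree := by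
  rw [isTree_iff_connected_and_card] at hG hH ⊢
  refine ⟨hG.1.sum_sup_edge hH.1, ?_⟩
  have hnew : s(Sum.inl v, Sum.inr w) ∉ (G ⊕g H).edgeSet :=
    not_adj_sum_inl_inr (G := G) (H := H) v w
  rw [edgeSet_sup, edgeSet_edge_of_ne Sum.inl_ne_inr, Set.union_singleton,
    Nat.card_coe_set_eq, Set.ncard_insert_of_notMem hnew, ← Nat.card_coe_set_eq,
    Nat.card_congr edgeSetSumEquiv, Nat.card_sum, Nat.card_sum]
  omega

theorem SimpleGraph.exists_iso_fin {V : Type} [Finite V] (G : SimpleGraph V) :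
    ∃ (n : ℕ) (T : SimpleGraph (Fin n)), Nonempty (G ≃g T) :=
  ⟨_, _, ⟨Iso.map (Finite.equivFin V) G⟩⟩

structure RootedGraph where
  V : Type
  [finite : Finite V]
  G : SimpleGraph V
  root : V

attribute [instance] RootedGraph.finite

namespace RootedGraph

def single : RootedGraph := ⟨Unit, ⊥, ()⟩

def join (A B : RootedGraph) : RootedGraph :=
  ⟨A.V ⊕ B.V, (A.G ⊕g B.G) ⊔ edge (.inl A.root) (.inr B.root), .inl A.root⟩

theorem isTree_single : single.G.IsTree := (.of_subsingleton : (⊥ : SimpleGraph Unit).IsTree)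

theorem isTree_join {A B : RootedGraph} (hA : A.G.IsTree) (hB : B.G.IsTree) :
    (A.join B).G.IsTree :=
  hA.sum_sup_edge hB A.root B.root

theorem join_adj_root (A B : RootedGraph) : (A.join B).G.Adj (.inl A.root) (.inr B.root) := by
  simp [join, edge_adj]

variable {W : Type*} (H : SimpleGraph W)

noncomputable def homCountAt (R : RootedGraph) (w : W) : ℕ :=
  Nat.card {f : R.G →g H // f R.root = w}

theorem card_hom_eq_sum_homCountAt [Fintype W] (R : RootedGraph) :
    Nat.card (R.G →g H) = ∑ w, R.homCountAt H w := by
  simp only [homCountAt]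
  rw [← Nat.card_sigma]
  exact Nat.card_congr (Equiv.sigmaFiberEquiv fun f : R.G →g H => f R.root).symm

theorem homCountAt_single (w : W) : single.homCountAt H w = 1 := by
  rw [homCountAt, Nat.card_eq_one_iff_unique]
  exact ⟨⟨fun f g => Subtype.ext (DFunLike.ext _ _ fun _ => f.2.trans g.2.symm)⟩,
    ⟨⟨⟨fun _ => w, fun h => h.elim⟩, rfl⟩⟩⟩

variable {H} in
def homJoinEquiv (A B : RootedGraph) (w : W) :
    {f : (A.join B).G →g H // f (A.join B).root = w} ≃
      {g : A.G →g H // g A.root = w} × {g : B.G →g H // H.Adj w (g B.root)} where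
  toFun f := (⟨f.1.comp ((Hom.ofLE le_sup_left).comp Embedding.sumInl.toHom), f.2⟩,
    ⟨f.1.comp ((Hom.ofLE le_sup_left).comp Embedding.sumInr.toHom), by
      have h := f.1.map_adj (join_adj_root A B)
      rwa [show f.1 (.inl A.root) = w from f.2] at h⟩)
  invFun gh := ⟨⟨Sum.elim gh.1.1 gh.2.1, by
      rintro (a | a) (b | b) hab
      all_goals simp only [join, sup_adj, sum_adj, edge_adj, Sum.inl.injEq, Sum.inr.injEq,
        reduceCtorEq, and_self, and_true, and_false, false_and, or_self, or_false, false_or, ne_eq,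
        not_false_eq_true, Sum.elim_inl, Sum.elim_inr] at hab ⊢
      · exact gh.1.1.map_adj hab
      · obtain ⟨rfl, rfl⟩ := hab
        rw [gh.1.2]; exact gh.2.2
      · obtain ⟨rfl, rfl⟩ := hab
        rw [gh.1.2]; exact gh.2.2.symm
      · exact gh.2.1.map_adj hab⟩, gh.1.2⟩
  left_inv f := Subtype.ext (DFunLike.ext _ _ (by rintro (a | a) <;> rfl))
  right_inv gh := rfl

theorem homCountAt_join [Fintype W] [DecidableRel H.Adj] (A B : RootedGraph) (w : W) :
    (A.join B).homCountAt H w =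
      A.homCountAt H w * ∑ w' ∈ H.neighborFinset w, B.homCountAt H w' := by
  rw [homCountAt, Nat.card_congr (homJoinEquiv A B w), Nat.card_prod, homCountAt,
    ← Nat.card_congr (Equiv.sigmaSubtypeFiberEquivSubtype (fun g : B.G →g H => g B.root)
      (q := (· ∈ H.neighborFinset w)) fun g => (mem_neighborFinset H w _).symm),
    Nat.card_sigma]
  exact congrArg _ (Finset.sum_coe_sort (H.neighborFinset w) (B.homCountAt H))

end RootedGraph

/-- Rooted trees of depth at most `k`: a single vertex, or a tree of depth `≤ k + 1` with a
tree of depth `≤ k` hung below its root. -/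
inductive TreeOfDepth : ℕ → Type
  | single {k : ℕ} : TreeOfDepth k
  | join {k : ℕ} : TreeOfDepth (k + 1) → TreeOfDepth k → TreeOfDepth (k + 1)

namespace TreeOfDepth

def labelHomCount : {k : ℕ} → TreeOfDepth k → WLLabel k → ℕ
  | _, single, _ => 1
  | _, join (k := k) A B, ℓ =>
      A.labelHomCount ℓ * ((ℓ : Multiset (WLLabel k)).map B.labelHomCount).sum

def glue : {k : ℕ} → TreeOfDepth k → TreeOfDepth k → TreeOfDepth k
  | _, A, single => A
  | _, A, join B C => join (A.glue B) C

theorem labelHomCount_glue {k : ℕ} (A B : TreeOfDepth k) (ℓ : WLLabel k) :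
    (A.glue B).labelHomCount ℓ = A.labelHomCount ℓ * B.labelHomCount ℓ := by
  induction B with
  | single => simp [glue, labelHomCount]
  | join B C ihB _ => simp [glue, labelHomCount, ihB, mul_assoc]

def toRootedGraph : {k : ℕ} → TreeOfDepth k → RootedGraph
  | _, single => .single
  | _, join A B => A.toRootedGraph.join B.toRootedGraph

theorem isTree_toRootedGraph {k : ℕ} (t : TreeOfDepth k) : t.toRootedGraph.G.IsTree := by
  induction t with
  | single => exact RootedGraph.isTree_single
  | join A B ihA ihB => exact RootedGraph.isTree_join ihA ihB

variable {V : Type} [Fintype V] (G : SimpleGraph V) [DecidableRel G.Adj]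

theorem homCountAt_toRootedGraph {k : ℕ} (t : TreeOfDepth k) (v : V) :
    t.toRootedGraph.homCountAt G v = t.labelHomCount (wlLabel G k v) := by
  induction t generalizing v with
  | single => exact RootedGraph.homCountAt_single G v
  | join A B ihA ihB =>
    rw [toRootedGraph, RootedGraph.homCountAt_join, ihA, labelHomCount, wlLabel,
      Multiset.map_map, Finset.sum_eq_multiset_sum]
    simp only [Function.comp_def, ihB]

theorem sum_map_labelHomCount_wlMultiset {k : ℕ} (t : TreeOfDepth k) :
    ((wlMultiset G k).map t.labelHomCount).sum = Nat.card (t.toRootedGraph.G →g G) := by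
  rw [RootedGraph.card_hom_eq_sum_homCountAt, wlMultiset, Multiset.map_map,
    Finset.sum_eq_multiset_sum]
  simp only [Function.comp_def, homCountAt_toRootedGraph]

def labelHomCountSubmonoid (k : ℕ) : Submonoid (WLLabel k → ℚ) where
  carrier := Set.range fun (t : TreeOfDepth k) ℓ => (t.labelHomCount ℓ : ℚ)
  mul_mem' := by
    rintro _ _ ⟨A, rfl⟩ ⟨B, rfl⟩
    exact ⟨A.glue B, funext fun ℓ => by simp [labelHomCount_glue]⟩
  one_mem' := ⟨single, funext fun ℓ => by simp [labelHomCount]⟩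

theorem multiset_eq_of_forall_sum_labelHomCount_eq {k : ℕ}
    (hsep : ∀ a b : WLLabel k,
      (∀ t : TreeOfDepth k, t.labelHomCount a = t.labelHomCount b) → a = b)
    {m₁ m₂ : Multiset (WLLabel k)}
    (h : ∀ t : TreeOfDepth k, (m₁.map t.labelHomCount).sum = (m₂.map t.labelHomCount).sum) :
    m₁ = m₂ := by
  refine Multiset.eq_of_forall_sum_map_eq (labelHomCountSubmonoid k) (fun a b hab => ?_) ?_
  · by_contra! hall
    exact hab (hsep a b fun t => Nat.cast_injective (R := ℚ) (hall _ ⟨t, rfl⟩))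
  · rintro _ ⟨t, rfl⟩
    simpa [Nat.cast_multiset_sum, Multiset.map_map, Function.comp_def] using
      congrArg (Nat.cast (R := ℚ)) (h t)

theorem eq_of_forall_labelHomCount_eq :
    ∀ {k : ℕ} {a b : WLLabel k},
      (∀ t : TreeOfDepth k, t.labelHomCount a = t.labelHomCount b) → a = b
  | 0, _, _, _ => rfl
  | _ + 1, a, b, h =>
    multiset_eq_of_forall_sum_labelHomCount_eq (fun _ _ => eq_of_forall_labelHomCount_eq)
      fun t => by simpa [labelHomCount] using h (join single t)

end TreeOfDepth

/-- If two finite simple graphs are distinguished by the Weisfeiler–Leman test, then some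
tree has a different number of homomorphisms to the two graphs. -/
theorem wl_distinguished_exists_tree_hom_count_ne
    {V₁ V₂ : Type} [Fintype V₁] [Fintype V₂]
    (G₁ : SimpleGraph V₁) (G₂ : SimpleGraph V₂)
    [DecidableRel G₁.Adj] [DecidableRel G₂.Adj]
    (h : ∃ k : ℕ, wlMultiset G₁ k ≠ wlMultiset G₂ k) :
    ∃ (n : ℕ) (T : SimpleGraph (Fin n)), T.IsTree ∧
      Nat.card (T →g G₁) ≠ Nat.card (T →g G₂) := by
  obtain ⟨k, hk⟩ := h
  by_contra! hcount
  refine hk (TreeOfDepth.multiset_eq_of_forall_sum_labelHomCount_eq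
    (fun _ _ => TreeOfDepth.eq_of_forall_labelHomCount_eq) fun t => ?_)
  obtain ⟨n, T, ⟨e⟩⟩ := t.toRootedGraph.G.exists_iso_fin
  rw [TreeOfDepth.sum_map_labelHomCount_wlMultiset G₁,
    TreeOfDepth.sum_map_labelHomCount_wlMultiset G₂,
    Nat.card_congr (e.homCongr (Iso.refl (G := G₁))),
    Nat.card_congr (e.homCongr (Iso.refl (G := G₂)))]
  exact hcount n T (e.isTree_iff.1 t.isTree_toRootedGraph)
end

section
/- If there exists a tree T that has a different number of graph homomorphisms to the finite simple graph G₁ than to the finite simple graph G₂, then G₁ and G₂ are distinguished by the Weisfeiler–Leman test, i.e., for some k the multisets of k-level WL labels of the vertices of G₁ and of G₂ differ. -/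
/-!
Weight each homomorphism `f : T →g G` by `∏ x, w x (wlLabel G k (f x))`. If `ℓ` is a leaf of
`T` with neighbour `p`, the images of `ℓ` range over the neighbours of `f p`, so their total
weight is a function of the `(k + 1)`-label of `f p`, which also determines its `k`-label: the
weighted count for `T` is a weighted count for `T - ℓ` at level `k + 1`. For a single vertex `x`
the weighted count `∑ v, w x (wlLabel G K v)` is a function of `wlMultiset G K`, so peeling off
leaves shows that the number of homomorphisms from a tree is a function of some
`wlMultiset G K`.
-/

open SimpleGraph

def WLLabel.restrict : (k : ℕ) → WLLabel (k + 1) → WLLabel k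
  | 0, _ => ()
  | k + 1, m => Multiset.map (WLLabel.restrict k) (m : Multiset (WLLabel (k + 1)))

section WLLabel

variable {W : Type} [Fintype W] (G : SimpleGraph W) [DecidableRel G.Adj]

theorem WLLabel.restrict_wlLabel (k : ℕ) (v : W) :
    WLLabel.restrict k (wlLabel G (k + 1) v) = wlLabel G k v := by
  induction k generalizing v with
  | zero => rfl
  | succ k ih =>
    change Multiset.map _ (Multiset.map _ _) = _
    rw [Multiset.map_map]
    exact congrArg (Multiset.map · _) (funext ih)

theorem sum_neighborFinset_eq_sum_map_wlLabel_succ {M : Type*} [AddCommMonoid M] (k : ℕ)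
    (g : WLLabel k → M) (v : W) :
    ∑ y ∈ G.neighborFinset v, g (wlLabel G k y)
      = (Multiset.map g (wlLabel G (k + 1) v : Multiset (WLLabel k))).sum := by
  change _ = (Multiset.map g (Multiset.map _ _)).sum
  rw [Multiset.map_map]
  rfl

end WLLabel

def SimpleGraph.homEquivOfLeaf {V W : Type} [DecidableEq V] {T : SimpleGraph V}
    (G : SimpleGraph W) [Fintype W] [DecidableRel G.Adj] {ℓ p : V}
    (hℓ : ∀ x, T.Adj ℓ x ↔ x = p) :
    (T →g G) ≃ Σ f : T.induce {ℓ}ᶜ →g G, G.neighborFinset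
      (f ⟨p, Set.mem_compl_singleton_iff.2 (T.ne_of_adj ((hℓ p).2 rfl)).symm⟩) where
  toFun f := ⟨f.comp (Embedding.induce _).toHom, f ℓ,
    (G.mem_neighborFinset _ _).2 (f.map_adj ((hℓ p).2 rfl)).symm⟩
  invFun g := ⟨fun x => if hx : x = ℓ then g.2 else g.1 ⟨x, hx⟩, by
    intro a b hab
    by_cases ha : a = ℓ
    · subst ha
      obtain rfl := (hℓ b).1 hab
      simpa [T.ne_of_adj hab.symm] using ((G.mem_neighborFinset _ _).1 g.2.2).symm
    by_cases hb : b = ℓ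
    · subst hb
      obtain rfl := (hℓ a).1 hab.symm
      simpa [ha] using (G.mem_neighborFinset _ _).1 g.2.2
    simpa [ha, hb] using
      g.1.map_adj (show (T.induce {ℓ}ᶜ).Adj ⟨a, ha⟩ ⟨b, hb⟩ from hab)⟩
  left_inv f := by
    ext x
    by_cases hx : x = ℓ <;> simp [hx]
  right_inv g := by
    refine Sigma.subtype_ext ?_ ?_
    · ext x
      exact dif_neg x.2
    · simp

/-- Weights on `T - ℓ` at level `k + 1`: the factor at `p` also carries the total weight
`∑ y ~ f p, w ℓ (wlLabel G k y)` of the images of the leaf `ℓ`, read off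
`m = wlLabel G (k + 1) (f p)`. -/
def absorbLeaf {V : Type} [DecidableEq V] {k : ℕ} (w : V → WLLabel k → ℕ) (ℓ p x : V)
    (m : WLLabel (k + 1)) : ℕ :=
  w x (WLLabel.restrict k m) *
    if x = p then (Multiset.map (w ℓ) (m : Multiset (WLLabel k))).sum else 1

section WeightedHomCount

variable {V W : Type} [Fintype V] [DecidableEq V] (T : SimpleGraph V) [DecidableRel T.Adj]
  [Fintype W] (G : SimpleGraph W) [DecidableRel G.Adj]

def weightedHomCount (k : ℕ) (w : V → WLLabel k → ℕ) : ℕ :=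
  ∑ f : T →g G, ∏ x, w x (wlLabel G k (f x))

theorem natCard_hom_eq_weightedHomCount (k : ℕ) :
    Nat.card (T →g G) = weightedHomCount T G k (fun _ _ => 1) := by
  simp [weightedHomCount, Nat.card_eq_fintype_card]

theorem weightedHomCount_of_subsingleton [Subsingleton V] (x₀ : V) (k : ℕ)
    (w : V → WLLabel k → ℕ) :
    weightedHomCount T G k w = (Multiset.map (w x₀) (wlMultiset G k)).sum := by
  let e : (T →g G) ≃ W :=
    { toFun := fun f => f x₀
      invFun := fun v => ⟨fun _ => v, fun h => absurd (Subsingleton.elim _ _) (T.ne_of_adj h)⟩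
      left_inv := fun f => by ext x; rw [Subsingleton.elim x x₀]; rfl
      right_inv := fun _ => rfl }
  rw [weightedHomCount, ← e.symm.sum_comp, wlMultiset, Multiset.map_map]
  refine Fintype.sum_congr _ _ fun v => ?_
  rw [Fintype.prod_subsingleton _ x₀]
  rfl

variable {T} in
theorem weightedHomCount_eq_of_leaf {ℓ p : V} (hℓ : ∀ x, T.Adj ℓ x ↔ x = p) (k : ℕ)
    (w : V → WLLabel k → ℕ) :
    weightedHomCount T G k w
      = weightedHomCount (T.induce {ℓ}ᶜ) G (k + 1) (fun x => absorbLeaf w ℓ p x) := by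
  classical
  have hp : p ∈ ({ℓ}ᶜ : Set V) :=
    Set.mem_compl_singleton_iff.2 (T.ne_of_adj ((hℓ p).2 rfl)).symm
  rw [weightedHomCount, ← (homEquivOfLeaf G hℓ).symm.sum_comp, Fintype.sum_sigma]
  refine Fintype.sum_congr _ _ fun f => ?_
  have hsplit : ∀ y : G.neighborFinset (f ⟨p, hp⟩),
      ∏ x, w x (wlLabel G k ((homEquivOfLeaf G hℓ).symm ⟨f, y⟩ x))
        = w ℓ (wlLabel G k y) * ∏ x : ({ℓ}ᶜ : Set V), w x (wlLabel G k (f x)) := fun y => by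
    rw [Fintype.prod_eq_mul_prod_subtype_ne _ ℓ]
    congr 1
    · simp [homEquivOfLeaf]
    · exact Fintype.prod_equiv (Equiv.subtypeEquivRight fun _ => Iff.rfl) _ _
        fun x => congrArg (w x ∘ wlLabel G k) (dif_neg x.2)
  simp only [hsplit, ← Finset.sum_mul, absorbLeaf, Finset.prod_mul_distrib,
    WLLabel.restrict_wlLabel]
  rw [Fintype.prod_eq_single ⟨p, hp⟩ fun x hx => if_neg fun h => hx (Subtype.ext h), if_pos rfl,
    ← sum_neighborFinset_eq_sum_map_wlLabel_succ, mul_comm]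
  congr 1
  exact Finset.sum_coe_sort (G.neighborFinset _) (fun y => w ℓ (wlLabel G k y))

end WeightedHomCount

theorem SimpleGraph.IsTree.exists_weightedHomCount_eq {V : Type} [Fintype V]
    [DecidableEq V] {T : SimpleGraph V} [DecidableRel T.Adj] (hT : T.IsTree) (k : ℕ)
    (w : V → WLLabel k → ℕ) :
    ∃ (K : ℕ) (F : Multiset (WLLabel K) → ℕ), ∀ {W : Type} [Fintype W] (G : SimpleGraph W)
      [DecidableRel G.Adj], weightedHomCount T G k w = F (wlMultiset G K) := by
  induction hn : Fintype.card V generalizing V k with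
  | zero => exact absurd hn (Fintype.card_pos_iff.2 hT.connected.nonempty).ne'
  | succ n ih =>
    rcases subsingleton_or_nontrivial V with hV | hV
    · obtain ⟨x₀⟩ := hT.connected.nonempty
      exact ⟨k, fun m => (m.map (w x₀)).sum,
        fun G _ => weightedHomCount_of_subsingleton T G x₀ k w⟩
    classical
    obtain ⟨ℓ, hℓ⟩ := hT.exists_vert_degree_one_of_nontrivial
    obtain ⟨p, hp, hp_unique⟩ := degree_eq_one_iff_existsUnique_adj.1 hℓ
    have hleaf : ∀ x, T.Adj ℓ x ↔ x = p := fun x => ⟨hp_unique x, fun h => h ▸ hp⟩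
    have hT' : (T.induce {ℓ}ᶜ).IsTree :=
      ⟨hT.connected.induce_compl_singleton_of_degree_eq_one hℓ, hT.isAcyclic.induce _⟩
    have hcard : Fintype.card ({ℓ}ᶜ : Set V) = n := by
      rw [← Set.toFinset_card, Set.toFinset_compl, Finset.card_compl, Set.toFinset_singleton,
        Finset.card_singleton, hn, Nat.add_sub_cancel]
    obtain ⟨K, F, hF⟩ := ih hT' (k + 1) (fun x => absorbLeaf w ℓ p x) hcard
    exact ⟨K, F, fun G _ => (weightedHomCount_eq_of_leaf G hleaf k w).trans (hF G)⟩

/-- If some tree has a different number of homomorphisms to `G₁` than to `G₂`, then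
`G₁` and `G₂` are distinguished by the Weisfeiler–Leman test. -/
theorem exists_tree_hom_count_ne_wl_distinguished
    {V₁ V₂ : Type} [Fintype V₁] [Fintype V₂]
    (G₁ : SimpleGraph V₁) (G₂ : SimpleGraph V₂)
    [DecidableRel G₁.Adj] [DecidableRel G₂.Adj]
    (h : ∃ (n : ℕ) (T : SimpleGraph (Fin n)), T.IsTree ∧
      Nat.card (T →g G₁) ≠ Nat.card (T →g G₂)) :
    ∃ k : ℕ, wlMultiset G₁ k ≠ wlMultiset G₂ k := by
  classical
  obtain ⟨n, T, hT, hne⟩ := h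
  obtain ⟨K, F, hF⟩ := hT.exists_weightedHomCount_eq 0 fun _ _ => 1
  refine ⟨K, fun hK => hne ?_⟩
  rw [natCard_hom_eq_weightedHomCount T G₁ 0, natCard_hom_eq_weightedHomCount T G₂ 0,
    hF, hF, hK]
end

section
/- Let G₁ and G₂ be finite simple graphs, u₁ a vertex of G₁ and u₂ a vertex of G₂ with equal k-level WL labels: ℓ_k^{G₁}(u₁) = ℓ_k^{G₂}(u₂). Then for every rooted tree (T, r) of depth at most k, the number of homomorphisms from T to G₁ mapping r to u₁ equals the number of homomorphisms from T to G₂ mapping r to u₂. -/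
theorem Nat.card_subtype_apply_mem_eq_sum {α β : Type*} [Finite α] (φ : α → β)
    (s : Finset β) :
    Nat.card {a // φ a ∈ s} = ∑ b ∈ s, Nat.card {a // φ a = b} := by
  rw [← Nat.card_congr <|
      Equiv.sigmaSubtypeFiberEquivSubtype φ (q := (· ∈ s)) fun _ => Iff.rfl,
    Nat.card_sigma, Finset.sum_coe_sort s fun b => Nat.card {a // φ a = b}]

namespace SimpleGraph

variable {W : Type*} {T : SimpleGraph W} {r w x y z a b c : W}

/-- `x` is below `w` when `w` lies on a shortest path from `r` to `x`; in a tree this is the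
subtree of `(T, r)` hanging at `w`. -/
def descendants (T : SimpleGraph W) (r w : W) : Set W :=
  {x | T.dist r x = T.dist r w + T.dist w x}

open Classical in
noncomputable def children [Fintype W] (T : SimpleGraph W) (r w : W) : Finset W :=
  {c | T.Adj w c ∧ T.dist r c = T.dist r w + 1}

theorem mem_descendants : x ∈ T.descendants r w ↔ T.dist r x = T.dist r w + T.dist w x :=
  Iff.rfl

theorem self_mem_descendants : w ∈ T.descendants r w := by
  simp [descendants]

theorem mem_descendants_root : x ∈ T.descendants r r := by
  simp [descendants]

theorem mem_children [Fintype W] :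
    c ∈ T.children r w ↔ T.Adj w c ∧ T.dist r c = T.dist r w + 1 := by
  simp [children]

theorem not_mem_descendants_of_mem_children [Fintype W] (hc : c ∈ T.children r w) :
    w ∉ T.descendants r c := by
  rw [mem_children] at hc
  rw [mem_descendants]
  omega

namespace Connected

theorem mem_descendants_trans (hT : T.Connected) (hxy : x ∈ T.descendants r y)
    (hyw : y ∈ T.descendants r w) :
    x ∈ T.descendants r w := by
  have h₁ : T.dist w x ≤ T.dist w y + T.dist y x := hT.dist_triangle
  have h₂ : T.dist r x ≤ T.dist r w + T.dist w x := hT.dist_triangle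
  simp only [mem_descendants] at *
  omega

theorem mem_descendants_of_dist_add_dist (hT : T.Connected) (hx : x ∈ T.descendants r w)
    (hy : T.dist w y + T.dist y x = T.dist w x) :
    y ∈ T.descendants r w ∧ x ∈ T.descendants r y := by
  have h₁ : T.dist r y ≤ T.dist r w + T.dist w y := hT.dist_triangle
  have h₂ : T.dist r x ≤ T.dist r y + T.dist y x := hT.dist_triangle
  simp only [mem_descendants] at *
  omega

theorem descendants_subset_of_mem_children [Fintype W] (hT : T.Connected)
    (hc : c ∈ T.children r w) :
    T.descendants r c ⊆ T.descendants r w := by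
  rw [mem_children] at hc
  have hcw : c ∈ T.descendants r w := by
    rw [mem_descendants, dist_eq_one_iff_adj.2 hc.1, hc.2]
  exact fun x hx => hT.mem_descendants_trans hx hcw

theorem exists_mem_children [Fintype W] (hT : T.Connected) (hx : x ∈ T.descendants r w)
    (hxw : x ≠ w) :
    ∃ c ∈ T.children r w, x ∈ T.descendants r c := by
  obtain ⟨p, hp⟩ := hT.exists_walk_length_eq_dist w x
  have hnil : ¬p.Nil := Walk.not_nil_of_ne (Ne.symm hxw)
  have hadj := Walk.adj_snd hnil
  have h₁ : T.dist p.snd x ≤ p.tail.length := dist_le _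
  have h₂ : T.dist w x ≤ T.dist w p.snd + T.dist p.snd x := hT.dist_triangle
  have h₃ := Walk.length_tail_add_one hnil
  rw [dist_eq_one_iff_adj.2 hadj] at h₂
  obtain ⟨hc, hxc⟩ := hT.mem_descendants_of_dist_add_dist hx
    (y := p.snd) (by rw [dist_eq_one_iff_adj.2 hadj]; omega)
  refine ⟨p.snd, mem_children.2 ⟨hadj, ?_⟩, hxc⟩
  rwa [mem_descendants, dist_eq_one_iff_adj.2 hadj] at hc

theorem exists_adj_mem_descendants (hT : T.Connected) (hx : x ∈ T.descendants r w)
    (hxw : x ≠ w) :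
    ∃ y ∈ T.descendants r w, T.Adj y x ∧ T.dist r y + 1 = T.dist r x := by
  obtain ⟨p, hp⟩ := hT.exists_walk_length_eq_dist w x
  have hnil : ¬p.Nil := Walk.not_nil_of_ne (Ne.symm hxw)
  have hadj := Walk.adj_penultimate hnil
  have h₁ : T.dist w p.penultimate ≤ p.dropLast.length := dist_le _
  have h₂ : T.dist w x ≤ T.dist w p.penultimate + T.dist p.penultimate x := hT.dist_triangle
  have h₃ : 0 < p.length := Walk.not_nil_iff_lt_length.1 hnil
  rw [Walk.length_dropLast] at h₁
  rw [dist_eq_one_iff_adj.2 hadj] at h₂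
  obtain ⟨hy, hxy⟩ := hT.mem_descendants_of_dist_add_dist hx
    (y := p.penultimate) (by rw [dist_eq_one_iff_adj.2 hadj]; omega)
  refine ⟨p.penultimate, hy, hadj, ?_⟩
  rw [mem_descendants, dist_eq_one_iff_adj.2 hadj] at hxy
  exact hxy.symm

end Connected

namespace IsTree

theorem eq_of_mem_descendants_of_dist_eq (hT : T.IsTree) (ha : x ∈ T.descendants r a)
    (hb : x ∈ T.descendants r b) (hab : T.dist r a = T.dist r b) : a = b := by
  -- `a` is the vertex at position `dist r a` on the unique path from `r` to `x`.
  have geodesic : ∀ a, x ∈ T.descendants r a →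
      ∃ P : T.Path r x, (P : T.Walk r x).getVert (T.dist r a) = a := by
    intro a ha
    obtain ⟨p, hp⟩ := hT.connected.exists_walk_length_eq_dist r a
    obtain ⟨q, hq⟩ := hT.connected.exists_walk_length_eq_dist a x
    refine ⟨⟨p.append q, (p.append q).isPath_of_length_eq_dist ?_⟩, ?_⟩
    · rw [Walk.length_append, hp, hq, ha]
    · simp [Walk.getVert_append', ← hp, Walk.getVert_length]
  obtain ⟨P, hP⟩ := geodesic a ha
  obtain ⟨Q, hQ⟩ := geodesic b hb
  obtain rfl := (hT.isAcyclic.subsingleton_path r x).elim P Q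
  rw [← hP, ← hQ, hab]

theorem eq_of_adj_of_dist_add_one (hT : T.IsTree) (hy : T.Adj y x) (hz : T.Adj z x)
    (hdy : T.dist r y + 1 = T.dist r x) (hdz : T.dist r z + 1 = T.dist r x) : y = z :=
  hT.eq_of_mem_descendants_of_dist_eq (r := r) (x := x) (a := y) (b := z)
    (by rw [mem_descendants, dist_eq_one_iff_adj.2 hy, hdy])
    (by rw [mem_descendants, dist_eq_one_iff_adj.2 hz, hdz]) (by omega)

theorem eq_of_adj_of_not_mem_descendants (hT : T.IsTree) (ha : a ∈ T.descendants r c)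
    (hab : T.Adj a b) (hb : b ∉ T.descendants r c) : a = c ∧ T.dist r b + 1 = T.dist r c := by
  rcases hT.dist_eq_dist_add_one_of_adj r hab with h | h
  · by_cases hac : a = c
    · subst hac
      exact ⟨rfl, h.symm⟩
    obtain ⟨y, hy, hya, hdy⟩ := hT.connected.exists_adj_mem_descendants ha hac
    obtain rfl := hT.eq_of_adj_of_dist_add_one hya hab.symm hdy h.symm
    exact absurd hy hb
  · refine absurd (hT.connected.mem_descendants_trans ?_ ha) hb
    rw [mem_descendants, dist_eq_one_iff_adj.2 hab, h]

end IsTree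

section Decomposition

variable [Fintype W] {V : Type*} {G : SimpleGraph V}

abbrev SubtreeHom (T : SimpleGraph W) (r w : W) (G : SimpleGraph V) (v : V) : Type _ :=
  {f : T.induce (T.descendants r w) →g G // f ⟨w, self_mem_descendants⟩ = v}

open Classical in
noncomputable def glueChildren (hT : T.Connected) (v : V)
    (g : ∀ c : T.children r w, T.induce (T.descendants r c) →g G) (x : T.descendants r w) : V :=
  if hx : (x : W) = w then v else
    have hc := hT.exists_mem_children x.2 hx
    g ⟨hc.choose, hc.choose_spec.1⟩ ⟨x, hc.choose_spec.2⟩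

theorem glueChildren_self (hT : T.Connected) (v : V)
    (g : ∀ c : T.children r w, T.induce (T.descendants r c) →g G) :
    glueChildren hT v g ⟨w, self_mem_descendants⟩ = v := by
  rw [glueChildren, dif_pos rfl]

theorem IsTree.glueChildren_of_mem (hT : T.IsTree) (v : V)
    (g : ∀ c : T.children r w, T.induce (T.descendants r c) →g G)
    (hc : c ∈ T.children r w) (hx : x ∈ T.descendants r c) :
    glueChildren hT.connected v g ⟨x, hT.connected.descendants_subset_of_mem_children hc hx⟩ =
      g ⟨c, hc⟩ ⟨x, hx⟩ := by
  have hxw : x ≠ w := by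
    rintro rfl
    exact not_mem_descendants_of_mem_children hc hx
  have congr_child : ∀ c' (hc' : c' ∈ T.children r w) (hx' : x ∈ T.descendants r c'),
      c' = c → g ⟨c', hc'⟩ ⟨x, hx'⟩ = g ⟨c, hc⟩ ⟨x, hx⟩ := by
    rintro _ _ _ rfl
    rfl
  have hex := hT.connected.exists_mem_children
    (hT.connected.descendants_subset_of_mem_children hc hx) hxw
  rw [glueChildren, dif_neg hxw]
  refine congr_child _ hex.choose_spec.1 hex.choose_spec.2 ?_
  refine hT.eq_of_mem_descendants_of_dist_eq hex.choose_spec.2 hx ?_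
  rw [(mem_children.1 hex.choose_spec.1).2, (mem_children.1 hc).2]

noncomputable def IsTree.glueChildrenHom (hT : T.IsTree) (v : V)
    (g : ∀ c : T.children r w, T.induce (T.descendants r c) →g G)
    (hg : ∀ c, G.Adj v (g c ⟨c, self_mem_descendants⟩)) :
    T.induce (T.descendants r w) →g G where
  toFun := glueChildren hT.connected v g
  map_rel' := by
    have key : ∀ a b : T.descendants r w, (a : W) ≠ w → T.Adj a b →
        G.Adj (glueChildren hT.connected v g a) (glueChildren hT.connected v g b) := by
      rintro ⟨a, ha⟩ ⟨b, hb⟩ (haw : a ≠ w) (hab : T.Adj a b)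
      obtain ⟨c, hc, hac⟩ := hT.connected.exists_mem_children ha haw
      rw [hT.glueChildren_of_mem v g hc hac]
      by_cases hbc : b ∈ T.descendants r c
      · rw [hT.glueChildren_of_mem v g hc hbc]
        exact (g ⟨c, hc⟩).map_rel hab
      obtain ⟨rfl, hdb⟩ := hT.eq_of_adj_of_not_mem_descendants hac hab hbc
      obtain rfl : w = b := by
        have hda := (mem_children.1 hc).2
        rw [mem_descendants] at hb
        exact hT.connected.dist_eq_zero_iff.1 (by omega)
      rw [glueChildren_self]
      exact (hg ⟨a, hc⟩).symm
    intro a b hab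
    by_cases haw : (a : W) = w
    · have hbw : (b : W) ≠ w := fun hbw => hab.ne (Subtype.ext (haw.trans hbw.symm))
      exact (key b a hbw hab.symm).symm
    · exact key a b haw hab

theorem IsTree.glueChildrenHom_apply (hT : T.IsTree) (v : V)
    (g : ∀ c : T.children r w, T.induce (T.descendants r c) →g G)
    (hg : ∀ c, G.Adj v (g c ⟨c, self_mem_descendants⟩)) (x : T.descendants r w) :
    hT.glueChildrenHom v g hg x = glueChildren hT.connected v g x :=
  rfl

noncomputable def IsTree.subtreeHomEquivPi (hT : T.IsTree) (v : V) :
    T.SubtreeHom r w G v ≃ ∀ c : T.children r w,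
      {g : T.induce (T.descendants r c) →g G // G.Adj v (g ⟨c, self_mem_descendants⟩)} where
  toFun f c :=
    ⟨f.1.comp (induceHomOfLE T (hT.connected.descendants_subset_of_mem_children c.2)).toHom, by
      have h := f.1.map_rel (a := ⟨w, self_mem_descendants⟩)
        (b := ⟨c, hT.connected.descendants_subset_of_mem_children c.2 self_mem_descendants⟩)
        (mem_children.1 c.2).1
      rwa [f.2] at h⟩
  invFun g := ⟨hT.glueChildrenHom v (fun c => (g c).1) (fun c => (g c).2),
    glueChildren_self hT.connected v (fun c => (g c).1)⟩
  left_inv f := by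
    refine Subtype.ext (RelHom.ext fun ⟨x, hx⟩ => ?_)
    dsimp only
    rw [IsTree.glueChildrenHom_apply]
    by_cases hxw : x = w
    · have hxw' : (⟨x, hx⟩ : T.descendants r w) = ⟨w, self_mem_descendants⟩ :=
        Subtype.ext hxw
      rw [hxw', glueChildren_self, f.2]
    · obtain ⟨c, hc, hxc⟩ := hT.connected.exists_mem_children hx hxw
      exact hT.glueChildren_of_mem _ _ hc hxc
  right_inv g := funext fun c => Subtype.ext <| RelHom.ext fun ⟨_, hx⟩ =>
    hT.glueChildren_of_mem v (fun c => (g c).1) c.2 hx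

theorem IsTree.card_subtreeHom_eq_prod (hT : T.IsTree) [Fintype V] [DecidableRel G.Adj]
    (v : V) : Nat.card (T.SubtreeHom r w G v) = ∏ c ∈ T.children r w,
      ∑ v' ∈ G.neighborFinset v, Nat.card (T.SubtreeHom r c G v') := by
  rw [Nat.card_congr (hT.subtreeHomEquivPi v), Nat.card_pi,
    ← Finset.prod_coe_sort (T.children r w)]
  refine Finset.prod_congr rfl fun c _ => ?_
  simp_rw [← mem_neighborFinset]
  exact Nat.card_subtype_apply_mem_eq_sum _ _

def rootedHomEquivSubtreeHom (u : V) : {f : T →g G // f r = u} ≃ T.SubtreeHom r r G u where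
  toFun f := ⟨f.1.comp (Embedding.induce _).toHom, f.2⟩
  invFun f := ⟨f.1.comp ⟨fun x => ⟨x, mem_descendants_root⟩, id⟩, f.2⟩
  left_inv _ := rfl
  right_inv _ := rfl

end Decomposition

end SimpleGraph

open SimpleGraph

/-- The number of homomorphisms of the subtree below `w` sending `w` to a vertex of label `μ`,
for subtrees of height at most `k`. -/
noncomputable def homCountOfLabel {W : Type*} [Fintype W] (T : SimpleGraph W) (r : W) :
    (k : ℕ) → W → WLLabel k → ℕ
  | 0, _, _ => 1
  | k + 1, w, μ =>
    ∏ c ∈ T.children r w, ((μ : Multiset (WLLabel k)).map (homCountOfLabel T r k c)).sum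

theorem SimpleGraph.IsTree.card_subtreeHom_eq_homCountOfLabel {W : Type*} [Fintype W]
    {T : SimpleGraph W} {r : W} (hT : T.IsTree) {V : Type} [Fintype V] (G : SimpleGraph V)
    [DecidableRel G.Adj] (k : ℕ) (w : W)
    (hdepth : ∀ x ∈ T.descendants r w, T.dist r x ≤ T.dist r w + k) (v : V) :
    Nat.card (T.SubtreeHom r w G v) = homCountOfLabel T r k w (wlLabel G k v) := by
  induction k generalizing w v with
  | zero =>
    rw [hT.card_subtreeHom_eq_prod, homCountOfLabel]
    refine Finset.prod_eq_one fun c hc => absurd (hdepth c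
      (hT.connected.descendants_subset_of_mem_children hc self_mem_descendants)) ?_
    rw [(mem_children.1 hc).2]
    omega
  | succ k ih =>
    rw [hT.card_subtreeHom_eq_prod, homCountOfLabel]
    refine Finset.prod_congr rfl fun c hc => ?_
    have hdepth_c : ∀ x ∈ T.descendants r c, T.dist r x ≤ T.dist r c + k := fun x hx => by
      have := hdepth x (hT.connected.descendants_subset_of_mem_children hc hx)
      rw [(mem_children.1 hc).2]
      omega
    rw [wlLabel, Multiset.map_map, Finset.sum_eq_multiset_sum]
    exact congrArg Multiset.sum (Multiset.map_congr rfl fun v' _ => ih c hdepth_c v')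

theorem SimpleGraph.IsTree.card_rootedHom_eq_homCountOfLabel {W : Type*} [Fintype W]
    {T : SimpleGraph W} {r : W} {k : ℕ} (hT : T.IsTree) (hdepth : ∀ w, T.dist r w ≤ k)
    {V : Type} [Fintype V] (G : SimpleGraph V) [DecidableRel G.Adj] (u : V) :
    Nat.card {f : T →g G // f r = u} = homCountOfLabel T r k r (wlLabel G k u) := by
  rw [Nat.card_congr (rootedHomEquivSubtreeHom u)]
  exact hT.card_subtreeHom_eq_homCountOfLabel G k r (fun x _ => by simpa using hdepth x) u

/-- If `u₁` and `u₂` have equal `k`-level WL labels, then every rooted tree of depth at most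
`k` has the same number of root-anchored homomorphisms to `(G₁, u₁)` and to `(G₂, u₂)`. -/
theorem wlLabel_eq_rooted_hom_count_eq
    {V₁ V₂ : Type} [Fintype V₁] [Fintype V₂]
    (G₁ : SimpleGraph V₁) (G₂ : SimpleGraph V₂)
    [DecidableRel G₁.Adj] [DecidableRel G₂.Adj]
    (k : ℕ) (u₁ : V₁) (u₂ : V₂)
    (h : wlLabel G₁ k u₁ = wlLabel G₂ k u₂)
    {W : Type} [Fintype W] (T : SimpleGraph W) (hT : T.IsTree) (r : W)
    (hdepth : ∀ w : W, T.dist r w ≤ k) :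
    Nat.card {f : T →g G₁ // f r = u₁} = Nat.card {f : T →g G₂ // f r = u₂} := by
  rw [hT.card_rootedHom_eq_homCountOfLabel hdepth G₁ u₁,
    hT.card_rootedHom_eq_homCountOfLabel hdepth G₂ u₂, h]
end

section
/- Fix k ≥ 0 and a finite family of pairs (Gᵢ, vᵢ), where each Gᵢ is a finite simple graph and vᵢ is a non-isolated vertex of Gᵢ. Then there exists a sequence of rooted trees (Tₙ, rₙ) of depth at most k such that: (1) for every i and every n, the number h(Tₙ, rₙ, Gᵢ, vᵢ) of homomorphisms from Tₙ to Gᵢ mapping rₙ to vᵢ is positive; and (2) whenever ℓ_k^{Gᵢ}(vᵢ) < ℓ_k^{Gⱼ}(vⱼ) in the recursive linear order on k-level WL labels, the ratio h(Tₙ, rₙ, Gᵢ, vᵢ) / h(Tₙ, rₙ, Gⱼ, vⱼ) tends to 0 as n → ∞. -/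
instance wlLabelDecEq : (k : ℕ) → DecidableEq (WLLabel k)
  | 0 => inferInstanceAs (DecidableEq Unit)
  | k + 1 => letI := wlLabelDecEq k; inferInstanceAs (DecidableEq (Multiset (WLLabel k)))

/-- The recursive ("lexicographic") strict order on `k`-level WL labels: two multisets of
`k`-level labels are compared at the largest `k`-level label where their multiplicities
differ. -/
def wlLT : (k : ℕ) → WLLabel k → WLLabel k → Prop
  | 0, _, _ => False
  | k + 1, M, N => ∃ a : WLLabel k,
      Multiset.count a (M : Multiset (WLLabel k)) < Multiset.count a (N : Multiset (WLLabel k)) ∧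
      ∀ b : WLLabel k, wlLT k a b →
        Multiset.count b (M : Multiset (WLLabel k)) = Multiset.count b (N : Multiset (WLLabel k))

/-!
The trees are the spherically symmetric trees `T(c)` of depth `k` in which every vertex at depth
`j` has `c j` children. Cutting off the root gives
`h(T(c), G, v) = (∑_{w ~ v} h(T(tail c), G, w)) ^ c 0`, so the count depends only on the WL label
of `v`: for a label `M` it is the `c 0`-th power of the sum, over the entries of the multiset `M`,
of the counts for `tail c`. By induction on `k`, choose `tail c` so that the counts of smaller
labels become negligible against those of larger ones. If `M < N`, then at the largest label where
their multiplicities differ `N` has more copies, so the sum for `N` eventually exceeds the sum for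
`M`, and a large enough exponent `c 0` drives the ratio of the `c 0`-th powers to zero.
-/

open Filter Topology

theorem Multiset.exists_maximal_count_ne_of_ne {α : Type*} [DecidableEq α] {r : α → α → Prop}
    [IsStrictOrder α r] {M N : Multiset α} (h : M ≠ N) :
    ∃ a, count a M ≠ count a N ∧ ∀ b, r a b → count b M = count b N := by
  let D : Set α := {b | count b M ≠ count b N}
  have hfin : D.Finite := (M + N).toFinset.finite_toSet.subset fun b hb => by
    simp only [Finset.mem_coe, mem_toFinset, ← count_pos, count_add]
    simp only [D, Set.mem_ofPred_eq] at hb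
    omega
  have hne : D.Nonempty := by
    by_contra hD
    exact h (ext.2 fun b => by_contra fun hb => hD ⟨b, hb⟩)
  obtain ⟨a, ha, hmax⟩ :=
    (Set.wellFoundedOn_iff.1 (hfin.wellFoundedOn (r := Function.swap r))).has_min D hne
  exact ⟨a, ha, fun b hab => by_contra fun hb => hmax b hb ⟨hab, hb, ha⟩⟩

instance wlLT.isStrictTotalOrder : (k : ℕ) → IsStrictTotalOrder (WLLabel k) (wlLT k)
  | 0 =>
    { trichotomous := fun _ _ _ _ => rfl
      irrefl := fun _ h => h
      trans := fun _ _ _ h => h.elim }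
  | k + 1 =>
    haveI := wlLT.isStrictTotalOrder k
    { irrefl := fun _ ⟨_, h, _⟩ => lt_irrefl _ h
      trans := by
        rintro M N P ⟨x, hx, hxe⟩ ⟨y, hy, hye⟩
        rcases trichotomous_of (wlLT k) x y with hxy | rfl | hyx
        · exact ⟨y, (hxe y hxy).trans_lt hy,
            fun b hb => (hxe b (_root_.trans hxy hb)).trans (hye b hb)⟩
        · exact ⟨x, hx.trans hy, fun b hb => (hxe b hb).trans (hye b hb)⟩
        · exact ⟨x, hx.trans_eq (hye x hyx),
            fun b hb => (hxe b hb).trans (hye b (_root_.trans hyx hb))⟩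
      trichotomous := fun M N hMN hNM => by_contra fun hne => by
        obtain ⟨a, ha, hab⟩ := Multiset.exists_maximal_count_ne_of_ne (r := wlLT k) hne
        rcases ha.lt_or_gt with ha | ha
        · exact hMN ⟨a, ha, hab⟩
        · exact hNM ⟨a, ha, fun b hb => (hab b hb).symm⟩ }

def wlNonempty : (k : ℕ) → WLLabel k → Prop
  | 0, _ => True
  | k + 1, M =>
    (show Multiset (WLLabel k) from M) ≠ 0 ∧
      ∀ ℓ ∈ (show Multiset (WLLabel k) from M), wlNonempty k ℓ

theorem wlNonempty_wlLabel {V : Type} [Fintype V] (G : SimpleGraph V) [DecidableRel G.Adj] :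
    ∀ (k : ℕ) {v : V}, (∃ w, G.Adj v w) → wlNonempty k (wlLabel G k v)
  | 0, _, _ => trivial
  | k + 1, v, ⟨w, hw⟩ => by
    refine ⟨fun h0 => Multiset.notMem_zero (wlLabel G k w)
      (h0 ▸ Multiset.mem_map_of_mem _ (by simpa using hw)), ?_⟩
    intro ℓ hℓ
    obtain ⟨u, hu, rfl⟩ := Multiset.mem_map.1 hℓ
    exact wlNonempty_wlLabel G k ⟨v, (by simpa using hu : G.Adj v u).symm⟩

namespace SimpleGraph

theorem isAcyclic_of_graded {V : Type*} {G : SimpleGraph V} (d : V → ℕ)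
    (hd : ∀ ⦃u w⦄, G.Adj u w → d u = d w + 1 ∨ d w = d u + 1)
    (hlower : ∀ ⦃u w w'⦄, G.Adj u w → G.Adj u w' → d w < d u → d w' < d u → w = w') :
    G.IsAcyclic := by
  classical
  intro u c hc
  -- rotate the cycle to start at a vertex of maximal grade; both its neighbours on it are lower
  obtain ⟨m, hm, hmax⟩ := c.support.toFinset.exists_max_image d ⟨u, by simp⟩
  rw [List.mem_toFinset] at hm
  have hc' := hc.rotate hm
  have lower : ∀ x ∈ (c.rotate m hm).support, G.Adj m x → d x < d m := fun x hx hadj => by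
    have := hmax x (by simpa [Walk.mem_support_rotate_iff] using hx)
    have := hd hadj
    omega
  exact hc'.snd_ne_penultimate (hlower (Walk.adj_snd hc'.not_nil)
    (Walk.adj_penultimate hc'.not_nil).symm
    (lower _ (Walk.getVert_mem_support _ _) (Walk.adj_snd hc'.not_nil))
    (lower _ (Walk.getVert_mem_support _ _) (Walk.adj_penultimate hc'.not_nil).symm))

theorem Iso.card_rootedHom_eq {α β W : Type*} {T : SimpleGraph α}
    {T' : SimpleGraph β} (φ : T ≃g T') (r : α) (G : SimpleGraph W) (v : W) :
    Nat.card {f : T' →g G // f (φ r) = v} = Nat.card {f : T →g G // f r = v} :=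
  Nat.card_congr
    { toFun f := ⟨f.1.comp φ.toHom, f.2⟩
      invFun f := ⟨f.1.comp φ.symm.toHom, by simpa using f.2⟩
      left_inv f := by ext; simp
      right_inv f := by ext; simp }

end SimpleGraph

theorem Multiset.sum_map_eq_sum_count_mul {α R : Type*} [DecidableEq α] [Semiring R]
    {P : Multiset α} {U : Finset α} (hP : P.toFinset ⊆ U) (f : α → R) :
    (P.map f).sum = ∑ b ∈ U, (P.count b : R) * f b := by
  rw [Finset.sum_multiset_map_count]
  simp only [nsmul_eq_mul]
  exact Finset.sum_subset hP fun b _ hb => by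
    simp [count_eq_zero_of_notMem (mt mem_toFinset.2 hb)]

theorem Multiset.eventually_sum_map_lt_sum_map {α : Type*} [DecidableEq α] {r : α → α → Prop}
    [Std.Trichotomous r] {g : ℕ → α → ℕ} {M N : Multiset α} {a : α} (hga : ∀ n, 0 < g n a)
    (hlt : M.count a < N.count a) (hhigh : ∀ b, r a b → M.count b = N.count b)
    (hlow : ∀ b ∈ M + N, r b a → Tendsto (fun n => (g n b : ℝ) / g n a) atTop (𝓝 0)) :
    ∀ᶠ n in atTop, (M.map (g n)).sum < (N.map (g n)).sum := by
  let U := (M + N).toFinset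
  let d : α → ℝ := fun b => (N.count b : ℝ) - M.count b
  have haU : a ∈ U := mem_toFinset.2 (mem_add.2 (.inr (count_pos.1 (by omega))))
  have hdiff : ∀ n, ((N.map (g n)).sum : ℝ) - (M.map (g n)).sum =
      g n a * ∑ b ∈ U, d b * (g n b / g n a) := fun n => by
    simp only [Nat.cast_multiset_sum, map_map, Function.comp_def]
    rw [sum_map_eq_sum_count_mul (U := U) (by simp [U]),
      sum_map_eq_sum_count_mul (U := U) (by simp [U]), ← Finset.sum_sub_distrib,
      Finset.mul_sum]
    refine Finset.sum_congr rfl fun b _ => ?_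
    field_simp [(hga n).ne']
    ring
  -- after dividing by `g n a`, the terms above `a` cancel and those below `a` vanish in the limit
  have hlim : Tendsto (fun n => ∑ b ∈ U, d b * (g n b / g n a)) atTop
      (𝓝 (∑ b ∈ U, d b * if b = a then 1 else 0)) := by
    refine tendsto_finsetSum _ fun b hb => ?_
    by_cases hba : b = a
    · subst hba
      simp [fun n => (hga n).ne']
    obtain hba' | hab := (trichotomous_of r b a).imp_right (Or.resolve_left · hba)
    · simpa [hba] using (hlow b (by simpa [U] using hb) hba').const_mul (d b)
    · simp [hba, d, hhigh b hab]
  have hpos : 0 < ∑ b ∈ U, d b * if b = a then 1 else 0 := by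
    simpa [haU, d] using hlt
  filter_upwards [hlim.eventually (lt_mem_nhds hpos)] with n hn
  exact_mod_cast sub_pos.1 (hdiff n ▸ mul_pos (Nat.cast_pos.2 (hga n)) hn)

theorem exists_pow_tendsto_zero {ι : Type*} (s : Finset ι) (q : ι → ℕ → ℝ)
    (hq : ∀ i ∈ s, ∀ᶠ n in atTop, 0 ≤ q i n ∧ q i n < 1) :
    ∃ e : ℕ → ℕ, ∀ i ∈ s, Tendsto (fun n => q i n ^ e n) atTop (𝓝 0) := by
  have key (n : ℕ) : ∃ e : ℕ, ∀ i ∈ s, 0 ≤ q i n ∧ q i n < 1 → q i n ^ e < 1 / (n + 1) := by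
    refine (s.eventually_all (l := atTop).2 fun i _ => ?_).exists
    by_cases h : 0 ≤ q i n ∧ q i n < 1
    · exact ((tendsto_pow_atTop_nhds_zero_of_lt_one h.1 h.2).eventually
        (gt_mem_nhds (by positivity))).mono fun _ he _ => he
    · exact .of_forall fun _ h' => absurd h' h
  choose e he using key
  refine ⟨e, fun i hi => squeeze_zero' ?_ ?_ tendsto_one_div_add_atTop_nhds_zero_nat⟩
  · filter_upwards [hq i hi] with n hn using pow_nonneg hn.1 _
  · filter_upwards [hq i hi] with n hn using (he n i hi hn).le

namespace SymTree

open SimpleGraph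

def Vert : {k : ℕ} → (Fin k → ℕ) → Type
  | 0, _ => Unit
  | _ + 1, c => Unit ⊕ Fin (c 0) × Vert (Fin.tail c)

instance instFintypeVert : {k : ℕ} → (c : Fin k → ℕ) → Fintype (Vert c)
  | 0, _ => inferInstanceAs (Fintype Unit)
  | _ + 1, c =>
    letI := instFintypeVert (Fin.tail c)
    inferInstanceAs (Fintype (Unit ⊕ Fin (c 0) × Vert (Fin.tail c)))

def root : {k : ℕ} → (c : Fin k → ℕ) → Vert c
  | 0, _ => ()
  | _ + 1, _ => Sum.inl ()

def Adj : {k : ℕ} → (c : Fin k → ℕ) → Vert c → Vert c → Prop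
  | 0, _, _, _ => False
  | _ + 1, _, Sum.inl _, Sum.inl _ => False
  | _ + 1, c, Sum.inl _, Sum.inr (_, y) => y = root (Fin.tail c)
  | _ + 1, c, Sum.inr (_, x), Sum.inl _ => x = root (Fin.tail c)
  | _ + 1, c, Sum.inr (i, x), Sum.inr (j, y) => i = j ∧ Adj (Fin.tail c) x y

theorem adj_symm : ∀ {k : ℕ} (c : Fin k → ℕ) {x y : Vert c}, Adj c x y → Adj c y x
  | 0, _, _, _, h => h
  | _ + 1, _, Sum.inl _, Sum.inl _, h => h
  | _ + 1, _, Sum.inl _, Sum.inr _, h => h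
  | _ + 1, _, Sum.inr _, Sum.inl _, h => h
  | _ + 1, c, Sum.inr _, Sum.inr _, h => ⟨h.1.symm, adj_symm (Fin.tail c) h.2⟩

theorem adj_irrefl : ∀ {k : ℕ} (c : Fin k → ℕ) (x : Vert c), ¬Adj c x x
  | 0, _, _, h => h
  | _ + 1, _, Sum.inl _, h => h
  | _ + 1, c, Sum.inr (_, x), h => adj_irrefl (Fin.tail c) x h.2

/-- The tree `T(c)`: every vertex at depth `j` has `c j` children. -/
def graph {k : ℕ} (c : Fin k → ℕ) : SimpleGraph (Vert c) where
  Adj := Adj c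
  symm := ⟨fun _ _ => adj_symm c⟩
  loopless := ⟨adj_irrefl c⟩

theorem adj_root_inr {k : ℕ} (c : Fin (k + 1) → ℕ) (i : Fin (c 0)) :
    (graph c).Adj (root c) (Sum.inr (i, root (Fin.tail c))) := rfl

def inclBranch {k : ℕ} (c : Fin (k + 1) → ℕ) (i : Fin (c 0)) :
    graph (Fin.tail c) →g graph c where
  toFun x := Sum.inr (i, x)
  map_rel' h := ⟨rfl, h⟩

theorem exists_walk_from_root : ∀ {k : ℕ} (c : Fin k → ℕ) (x : Vert c),
    ∃ p : (graph c).Walk (root c) x, p.length ≤ k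
  | 0, _, () => ⟨.nil, le_rfl⟩
  | _ + 1, _, Sum.inl () => ⟨.nil, Nat.zero_le _⟩
  | _ + 1, c, Sum.inr (i, x) => by
    obtain ⟨p, hp⟩ := exists_walk_from_root (Fin.tail c) x
    refine ⟨.cons (adj_root_inr c i) (p.map (inclBranch c i)), ?_⟩
    change (p.map _).length + 1 ≤ _
    rw [Walk.length_map]
    omega

def depth : {k : ℕ} → (c : Fin k → ℕ) → Vert c → ℕ
  | 0, _, _ => 0
  | _ + 1, _, Sum.inl _ => 0
  | _ + 1, c, Sum.inr (_, x) => depth (Fin.tail c) x + 1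

theorem depth_root : ∀ {k : ℕ} (c : Fin k → ℕ), depth c (root c) = 0
  | 0, _ => rfl
  | _ + 1, _ => rfl

theorem depth_adj : ∀ {k : ℕ} (c : Fin k → ℕ) ⦃x y : Vert c⦄, (graph c).Adj x y →
    depth c x = depth c y + 1 ∨ depth c y = depth c x + 1
  | 0, _, _, _, h => h.elim
  | _ + 1, _, Sum.inl _, Sum.inl _, h => h.elim
  | _ + 1, c, Sum.inl _, Sum.inr (_, _), h => .inr (by
    obtain rfl : _ = root (Fin.tail c) := h; simp [depth, depth_root])
  | _ + 1, c, Sum.inr (_, _), Sum.inl _, h => .inl (by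
    obtain rfl : _ = root (Fin.tail c) := h; simp [depth, depth_root])
  | _ + 1, c, Sum.inr (_, _), Sum.inr (_, _), h => by
    have := depth_adj (Fin.tail c) h.2
    simp only [depth]
    omega

theorem eq_of_adj_of_depth_lt : ∀ {k : ℕ} (c : Fin k → ℕ) ⦃x y z : Vert c⦄,
    (graph c).Adj x y → (graph c).Adj x z → depth c y < depth c x → depth c z < depth c x →
      y = z
  | 0, _, _, _, _, h, _, _, _ => h.elim
  | _ + 1, _, Sum.inl _, _, _, _, _, h, _ => (Nat.not_lt_zero _ h).elim
  | _ + 1, _, Sum.inr _, Sum.inl _, Sum.inl _, _, _, _, _ => rfl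
  | _ + 1, c, Sum.inr (_, _), Sum.inl _, Sum.inr (_, _), hy, hz, _, hzx => by
    obtain rfl : _ = root (Fin.tail c) := hy
    have := depth_adj (Fin.tail c) hz.2
    simp only [depth, depth_root] at hzx this
    omega
  | _ + 1, c, Sum.inr (_, _), Sum.inr (_, _), Sum.inl _, hy, hz, hyx, _ => by
    obtain rfl : _ = root (Fin.tail c) := hz
    have := depth_adj (Fin.tail c) hy.2
    simp only [depth, depth_root] at hyx this
    omega
  | _ + 1, c, Sum.inr (_, _), Sum.inr (_, _), Sum.inr (_, _), hy, hz, hyx, hzx => by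
    obtain ⟨rfl, hy⟩ := hy
    obtain ⟨rfl, hz⟩ := hz
    rw [eq_of_adj_of_depth_lt (Fin.tail c) hy hz (Nat.lt_of_succ_lt_succ hyx)
      (Nat.lt_of_succ_lt_succ hzx)]

theorem isTree {k : ℕ} (c : Fin k → ℕ) : (graph c).IsTree where
  connected := (connected_iff_exists_forall_reachable _).2
    ⟨root c, fun x => (exists_walk_from_root c x).choose.reachable⟩
  isAcyclic := isAcyclic_of_graded (depth c) (depth_adj c) (eq_of_adj_of_depth_lt c)

variable {W : Type} (G : SimpleGraph W)

def rootedHomEquiv {k : ℕ} (c : Fin (k + 1) → ℕ) (v : W) :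
    {f : graph c →g G // f (root c) = v} ≃
      (Fin (c 0) → {g : graph (Fin.tail c) →g G // G.Adj v (g (root (Fin.tail c)))}) where
  toFun f i := ⟨f.1.comp (inclBranch c i), by
    have h := f.1.map_adj (adj_root_inr c i)
    rwa [f.2] at h⟩
  invFun F := ⟨⟨fun | Sum.inl _ => v | Sum.inr (i, x) => (F i).1 x, by
      rintro (_ | ⟨i, x⟩) (_ | ⟨j, y⟩) h
      · exact h.elim
      · obtain rfl : y = root _ := h
        exact (F j).2
      · obtain rfl : x = root _ := h
        exact (F i).2.symm
      · obtain ⟨rfl, h⟩ := h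
        exact (F i).1.map_adj h⟩, rfl⟩
  left_inv f := by
    ext (_ | ⟨i, x⟩)
    · exact f.2.symm
    · rfl
  right_inv F := rfl

theorem card_rootedHom_zero [Finite W] (c : Fin 0 → ℕ) (v : W) :
    Nat.card {f : graph c →g G // f (root c) = v} = 1 :=
  Nat.card_eq_one_iff_unique.2
    ⟨⟨fun f g => Subtype.ext (RelHom.ext fun () => f.2.trans g.2.symm)⟩,
      ⟨⟨⟨fun _ => v, fun h => h.elim⟩, rfl⟩⟩⟩

theorem card_rootedHom_succ [Fintype W] [DecidableRel G.Adj] {k : ℕ} (c : Fin (k + 1) → ℕ)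
    (v : W) :
    Nat.card {f : graph c →g G // f (root c) = v} =
      (∑ w ∈ G.neighborFinset v,
        Nat.card {f : graph (Fin.tail c) →g G // f (root (Fin.tail c)) = w}) ^ c 0 := by
  have hbranch : Nat.card {g : graph (Fin.tail c) →g G // G.Adj v (g (root (Fin.tail c)))} =
      ∑ w ∈ G.neighborFinset v,
        Nat.card {f : graph (Fin.tail c) →g G // f (root (Fin.tail c)) = w} := by
    rw [Finset.sum_subtype _ (fun w => G.mem_neighborFinset v w), ← Nat.card_sigma]
    exact Nat.card_congr (Equiv.sigmaSubtypeFiberEquivSubtype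
      (fun g : graph (Fin.tail c) →g G => g (root (Fin.tail c)))
      fun _ => Iff.rfl).symm
  rw [Nat.card_congr (rootedHomEquiv G c v), Nat.card_fun, Nat.card_fin, hbranch]

def homCount : {k : ℕ} → (Fin k → ℕ) → WLLabel k → ℕ
  | 0, _, _ => 1
  | _ + 1, c, M => ((show Multiset _ from M).map (homCount (Fin.tail c))).sum ^ c 0

theorem card_rootedHom_eq_homCount [Fintype W] [DecidableRel G.Adj] :
    ∀ {k : ℕ} (c : Fin k → ℕ) (v : W),
      Nat.card {f : graph c →g G // f (root c) = v} = homCount c (wlLabel G k v)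
  | 0, c, v => card_rootedHom_zero G c v
  | k + 1, c, v => by
    rw [card_rootedHom_succ, Finset.sum_congr rfl fun w _ => card_rootedHom_eq_homCount _ w,
      Finset.sum_eq_multiset_sum]
    simp only [homCount, wlLabel, Multiset.map_map]
    rfl

theorem homCount_pos : ∀ {k : ℕ} (c : Fin k → ℕ) {ℓ : WLLabel k}, wlNonempty k ℓ →
    0 < homCount c ℓ
  | 0, _, _, _ => one_pos
  | _ + 1, c, _, ⟨hne, hall⟩ => by
    obtain ⟨a, ha⟩ := Multiset.exists_mem_of_ne_zero hne
    exact pow_pos ((homCount_pos _ (hall a ha)).trans_le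
      (Multiset.le_sum_of_mem (Multiset.mem_map_of_mem _ ha))) _

theorem eventually_sum_map_homCount_lt {k : ℕ} {c : ℕ → Fin k → ℕ} {L : Finset (WLLabel k)}
    (hL : ∀ ℓ ∈ L, wlNonempty k ℓ)
    (hc : ∀ ℓ ∈ L, ∀ ℓ' ∈ L, wlLT k ℓ ℓ' →
      Tendsto (fun n => (homCount (c n) ℓ : ℝ) / homCount (c n) ℓ') atTop (𝓝 0))
    {M N : Multiset (WLLabel k)} (hM : ∀ ℓ ∈ M, ℓ ∈ L) (hN : ∀ ℓ ∈ N, ℓ ∈ L)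
    (hMN : wlLT (k + 1) M N) :
    ∀ᶠ n in atTop, (M.map (homCount (c n))).sum < (N.map (homCount (c n))).sum := by
  obtain ⟨a, ha, hhigh⟩ := hMN
  have haL : a ∈ L := hN a (Multiset.count_pos.1 ((Nat.zero_le _).trans_lt ha))
  exact Multiset.eventually_sum_map_lt_sum_map (r := wlLT k) (g := fun n => homCount (c n))
    (fun n => homCount_pos (c n) (hL a haL)) ha hhigh
    (fun b hb hba => hc b ((Multiset.mem_add.1 hb).elim (hM b) (hN b)) a haL hba)

theorem exists_homCount_div_tendsto_zero : ∀ (k : ℕ) (L : Finset (WLLabel k)),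
    (∀ ℓ ∈ L, wlNonempty k ℓ) → ∃ c : ℕ → Fin k → ℕ, ∀ ℓ ∈ L, ∀ ℓ' ∈ L, wlLT k ℓ ℓ' →
      Tendsto (fun n => (homCount (c n) ℓ : ℝ) / homCount (c n) ℓ') atTop (𝓝 0)
  | 0, _, _ => ⟨fun _ => Fin.elim0, fun _ _ _ _ h => h.elim⟩
  | k + 1, L, hL => by
    classical
    let L' : Finset (WLLabel k) :=
      L.biUnion fun M => (show Multiset (WLLabel k) from M).toFinset
    have mem_L' : ∀ M ∈ L, ∀ ℓ ∈ (show Multiset (WLLabel k) from M), ℓ ∈ L' :=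
      fun M hM ℓ hℓ => Finset.mem_biUnion.2 ⟨M, hM, Multiset.mem_toFinset.2 hℓ⟩
    have hL' : ∀ ℓ ∈ L', wlNonempty k ℓ := fun ℓ hℓ => by
      obtain ⟨M, hM, hℓ⟩ := Finset.mem_biUnion.1 hℓ
      exact (hL M hM).2 ℓ (Multiset.mem_toFinset.1 hℓ)
    obtain ⟨c, hc⟩ := exists_homCount_div_tendsto_zero k L' hL'
    -- the branch sums, whose `e n`-th powers are the counts for the tree with `e n` root branches
    let A (n : ℕ) (M : WLLabel (k + 1)) : ℕ :=
      ((show Multiset (WLLabel k) from M).map (homCount (c n))).sum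
    have hA : ∀ p ∈ (L ×ˢ L).filter (fun p => wlLT (k + 1) p.1 p.2),
        ∀ᶠ n in atTop, 0 ≤ (A n p.1 : ℝ) / A n p.2 ∧ (A n p.1 : ℝ) / A n p.2 < 1 := by
      simp only [Finset.mem_filter, Finset.mem_product, and_imp, Prod.forall]
      intro M N hM hN hMN
      filter_upwards [eventually_sum_map_homCount_lt hL' hc (mem_L' M hM) (mem_L' N hN) hMN]
        with n hn
      have hpos : (0 : ℝ) < A n N := by exact_mod_cast (Nat.zero_le _).trans_lt hn
      exact ⟨by positivity, (div_lt_one hpos).2 (by exact_mod_cast hn)⟩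
    obtain ⟨e, he⟩ := exists_pow_tendsto_zero _ _ hA
    refine ⟨fun n => Fin.cons (e n) (c n), fun M hM N hN hMN => ?_⟩
    have hcount (n : ℕ) (P : WLLabel (k + 1)) :
        homCount (Fin.cons (e n) (c n)) P = A n P ^ e n := rfl
    convert he (M, N) (by simp [hM, hN, hMN]) using 2 with n
    simp [hcount, div_pow]

end SymTree

/-- Domination lemma: for a finite family of graphs with chosen non-isolated vertices, there is
a sequence of rooted trees of depth at most `k` whose rooted homomorphism counts are positive
and respect (asymptotically, with domination) the recursive order on `k`-level WL labels. -/
theorem exists_tree_seq_rooted_hom_count_dominates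
    (k : ℕ) {ι : Type} [Fintype ι] {V : ι → Type} [∀ i, Fintype (V i)]
    (G : (i : ι) → SimpleGraph (V i)) [∀ i, DecidableRel (G i).Adj]
    (v : (i : ι) → V i) (hv : ∀ i, ∃ w, (G i).Adj (v i) w) :
    ∃ (m : ℕ → ℕ) (T : (n : ℕ) → SimpleGraph (Fin (m n))) (r : (n : ℕ) → Fin (m n)),
      (∀ n, (T n).IsTree) ∧
      (∀ n w, (T n).dist (r n) w ≤ k) ∧
      (∀ i n, 0 < Nat.card {f : T n →g G i // f (r n) = v i}) ∧
      (∀ i j : ι, wlLT k (wlLabel (G i) k (v i)) (wlLabel (G j) k (v j)) →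
        Filter.Tendsto
          (fun n => (Nat.card {f : T n →g G i // f (r n) = v i} : ℝ) /
            (Nat.card {f : T n →g G j // f (r n) = v j} : ℝ))
          Filter.atTop (nhds 0)) := by
  classical
  obtain ⟨c, hc⟩ := SymTree.exists_homCount_div_tendsto_zero k
    (Finset.univ.image fun i => wlLabel (G i) k (v i))
    (by simpa using fun i => wlNonempty_wlLabel (G i) k (hv i))
  let T (n : ℕ) := (SymTree.graph (c n)).map (Fintype.equivFin (SymTree.Vert (c n)))
  let φ (n : ℕ) : SymTree.graph (c n) ≃g T n := SimpleGraph.Iso.map _ _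
  have hcount (i : ι) (n : ℕ) :
      Nat.card {f : T n →g G i // f (φ n (SymTree.root (c n))) = v i} =
        SymTree.homCount (c n) (wlLabel (G i) k (v i)) := by
    rw [(φ n).card_rootedHom_eq, SymTree.card_rootedHom_eq_homCount]
  refine ⟨_, T, fun n => φ n (SymTree.root (c n)), fun n => (φ n).isTree_iff.1 (SymTree.isTree _),
    fun n w => ?_, fun i n => ?_, fun i j hij => ?_⟩
  · obtain ⟨p, hp⟩ := SymTree.exists_walk_from_root (c n) ((φ n).symm w)
    calc _ = (T n).dist ((φ n).toHom (SymTree.root (c n))) ((φ n).toHom ((φ n).symm w)) := by simp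
      _ ≤ (p.map (φ n).toHom).length := SimpleGraph.dist_le _
      _ ≤ k := by simpa using hp
  · rw [hcount]
    exact SymTree.homCount_pos _ (wlNonempty_wlLabel (G i) k (hv i))
  · simp_rw [hcount]
    exact hc _ (by simp) _ (by simp) hij
end
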